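/- Let m > 0, τ ≥ 1, η₀ > 0, and define η_t = τ / (τ/η₀ + m·t) for nonnegative integers t. Then for all t ≥ 1, (1 - m·η_t) · η_t^{-τ} ≤ η_{t-1}^{-τ}. -/

import Mathlib

/-! The weights `η_t^{-τ}` are `τ`-th powers of `η_t⁻¹ = 1/η₀ + m t / τ`, which decreases by `m/τ`
from `t` to `t - 1`. Pulling out the factor `η_t⁻¹` reduces the claim to Bernoulli's inequality
`1 - τ x ≤ (1 - x)^τ` for `x = m η_t / τ ≤ 1` and `τ ≥ 1`. -/

open Real

theorem one_sub_mul_div_mul_rpow_le_sub_rpow {u d τ : ℝ} (hu : 0 < u) (hdu : d ≤ u)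
    (hτ : 1 ≤ τ) : (1 - τ * d / u) * u ^ τ ≤ (u - d) ^ τ := by
  have hbernoulli : 1 - τ * d / u ≤ (1 - d / u) ^ τ := by
    have hx : -1 ≤ -(d / u) := by rw [neg_le_neg_iff, div_le_one hu]; exact hdu
    convert one_add_mul_self_le_rpow_one_add hx hτ using 2 <;> ring
  have hfactor : u - d = (1 - d / u) * u := by field_simp
  have hnonneg : 0 ≤ 1 - d / u := by rw [sub_nonneg, div_le_one hu]; exact hdu
  rw [hfactor, mul_rpow hnonneg hu.le]
  exact mul_le_mul_of_nonneg_right hbernoulli (rpow_nonneg hu.le τ)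

theorem one_sub_mul_mul_rpow_neg_le {x y c τ : ℝ} (hx : 0 < x) (hy : 0 < y) (hτ : 1 ≤ τ)
    (hxy : y⁻¹ = x⁻¹ - c / τ) : (1 - c * x) * x ^ (-τ) ≤ y ^ (-τ) := by
  have hτ0 : τ ≠ 0 := by positivity
  have hcx : c * x = τ * (c / τ) / x⁻¹ := by field_simp
  have hle : c / τ ≤ x⁻¹ := by linarith [inv_pos.2 hy]
  rw [rpow_neg hx.le, rpow_neg hy.le, ← inv_rpow hx.le, ← inv_rpow hy.le, hxy, hcx]
  exact one_sub_mul_div_mul_rpow_le_sub_rpow (inv_pos.2 hx) hle hτ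

theorem stmt_1 (m τ η₀ : ℝ) (hm : 0 < m) (hτ : 1 ≤ τ) (hη₀ : 0 < η₀)
    (η : ℕ → ℝ) (hη : ∀ t : ℕ, η t = τ / (τ / η₀ + m * t)) :
    ∀ t : ℕ, 1 ≤ t → (1 - m * η t) * (η t) ^ (-τ) ≤ (η (t - 1)) ^ (-τ) := by
  intro t ht
  have hτ0 : 0 < τ := by linarith
  have hη_pos : ∀ k : ℕ, 0 < η k := fun k => by rw [hη k]; positivity
  have hη_inv : (η (t - 1))⁻¹ = (η t)⁻¹ - m / τ := by
    rw [hη, hη, Nat.cast_sub ht]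
    field_simp
    ring
  exact one_sub_mul_mul_rpow_neg_le (hη_pos t) (hη_pos (t - 1)) hτ hη_inv
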